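/- Let 1 ≤ n < k be integers. The algebra of restrictions {x ↦ Q(0_{k−n}, x) : Q a W(D_k)-invariant polynomial on ℝ^k} equals the algebra of H_n-invariant polynomials on ℝ^n, and this also equals the algebra of restrictions {x ↦ Q(0_{k−n}, x) : Q an H_k-invariant polynomial on ℝ^k}. -/

import Mathlib

/-!
An element of `H_n` acting on the last `n` coordinates of `ℝ^k` becomes an element of `W(D_k)`
after adding, if needed, one sign change on the first coordinate, which `(0_{k-n}, x)` does not
see since `n < k`; so restrictions of `W(D_k)`-invariants are `H_n`-invariant. Conversely, an
`H_n`-invariant `P` is even in each variable and symmetric, hence `P(x) = F(e_1(x²), …, e_n(x²))`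
with `e_r` the elementary symmetric polynomials. Then `Q(y) = F(e_1(y²), …, e_n(y²))` is
`H_k`-invariant, so in particular `W(D_k)`-invariant, and `Q(0, x) = P(x)` because padding by
zeros does not change any `e_r`.
-/

/-- The padding map `ℝ^n → ℝ^k`, `x ↦ (0_{k-n}, x)`. -/
def padk (k n : ℕ) (x : Fin n → ℝ) : Fin k → ℝ :=
  fun j => if h : (j : ℕ) < k - n then 0
    else x ⟨(j : ℕ) - (k - n), by have := j.isLt; omega⟩

/-- `P` is invariant under the hyperoctahedral group `H_m`. -/
def HInv (m : ℕ) (P : MvPolynomial (Fin m) ℝ) : Prop :=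
  ∀ (σ : Equiv.Perm (Fin m)) (ε : Fin m → ℝ), (∀ j, ε j = 1 ∨ ε j = -1) →
    ∀ x : Fin m → ℝ,
      MvPolynomial.eval (fun j => ε j * x (σ j)) P = MvPolynomial.eval x P

/-- `P` is invariant under `W(D_m)` (even number of sign changes). -/
def DInv (m : ℕ) (P : MvPolynomial (Fin m) ℝ) : Prop :=
  ∀ (σ : Equiv.Perm (Fin m)) (ε : Fin m → ℝ), (∀ j, ε j = 1 ∨ ε j = -1) →
    (∏ j, ε j) = 1 →
    ∀ x : Fin m → ℝ,
      MvPolynomial.eval (fun j => ε j * x (σ j)) P = MvPolynomial.eval x P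

open MvPolynomial
open Function (extend extend_apply' apply_extend)

namespace MvPolynomial

variable {σ τ R : Type*}

theorem eval_aeval [CommSemiring R] (x : τ → R) (g : σ → MvPolynomial τ R)
    (φ : MvPolynomial σ R) : eval x (aeval g φ) = eval (fun j => eval x (g j)) φ :=
  eval₂Hom_bind₁ _ _ _ _

theorem coeff_aeval_C_mul_X [CommSemiring R] (c : σ → R) (φ : MvPolynomial σ R)
    (d : σ →₀ ℕ) :
    coeff d (aeval (fun j => C (c j) * X j) φ) = d.prod (fun j e => c j ^ e) * coeff d φ := by
  classical
  induction φ using induction_on' with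
  | monomial s a =>
    rw [aeval_monomial]
    simp only [mul_pow, Finsupp.prod_mul, ← C_pow, ← map_finsuppProd, ← monomial_eq,
      algebraMap_eq, coeff_C_mul, coeff_monomial]
    split_ifs with h
    · subst h
      ring
    · simp
  | add p q hp hq => simp only [map_add, coeff_add, hp, hq, mul_add]

theorem exists_expand_eq_of_forall_dvd [CommSemiring R] {p : ℕ} {φ : MvPolynomial σ R}
    (h : ∀ d ∈ φ.support, ∀ i, p ∣ d i) : ∃ ψ, expand p ψ = φ := by
  refine ⟨∑ d ∈ φ.support, monomial (d.mapRange (· / p) (Nat.zero_div p)) (coeff d φ), ?_⟩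
  conv_rhs => rw [φ.as_sum]
  simp only [map_sum, expand_monomial]
  refine Finset.sum_congr rfl fun d hd => ?_
  have hd' : p • d.mapRange (· / p) (Nat.zero_div p) = d := by
    ext i
    simp [Nat.mul_div_cancel' (h d hd i)]
  rw [hd']

theorem two_dvd_of_eval_update_neg [CommRing R] [IsDomain R] [CharZero R] [DecidableEq σ]
    {φ : MvPolynomial σ R} {i : σ} (h : ∀ x, eval (Function.update x i (-x i)) φ = eval x φ)
    {d : σ →₀ ℕ} (hd : d ∈ φ.support) : 2 ∣ d i := by
  set c : σ → R := Function.update 1 i (-1)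
  have hflip : aeval (fun j => C (c j) * X j) φ = φ := by
    refine funext fun x => ?_
    have hx : (fun j => eval x (C (c j) * X j)) = Function.update x i (-x i) := by
      funext j
      rcases eq_or_ne j i with rfl | hj <;> simp [c, *]
    rw [eval_aeval, hx, h]
  have hsign : d.prod (fun j e => c j ^ e) = (-1) ^ d i := by
    rw [Finsupp.prod, Finset.prod_eq_single i (fun j _ hj => by simp [c, hj])
      (fun hi => by simp [Finsupp.notMem_support_iff.1 hi])]
    simp [c]
  have hcoeff := coeff_aeval_C_mul_X c φ d
  rw [hflip, hsign] at hcoeff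
  have hpow : (-1 : R) ^ d i = 1 := (mul_eq_right₀ (mem_support_iff.1 hd)).1 hcoeff.symm
  exact even_iff_two_dvd.1 ((neg_one_pow_eq_one_iff_even (by norm_num)).1 hpow)

theorem exists_isSymmetric_expand_two [CommRing R] [IsDomain R] [CharZero R] [DecidableEq σ]
    {φ : MvPolynomial σ R} (hperm : ∀ (π : Equiv.Perm σ) x, eval (x ∘ π) φ = eval x φ)
    (hsign : ∀ i x, eval (Function.update x i (-x i)) φ = eval x φ) :
    ∃ ψ : MvPolynomial σ R, ψ.IsSymmetric ∧ expand 2 ψ = φ := by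
  obtain ⟨ψ, rfl⟩ := exists_expand_eq_of_forall_dvd fun d hd i =>
    two_dvd_of_eval_update_neg (hsign i) hd
  refine ⟨ψ, fun π => expand_injective two_pos ?_, rfl⟩
  rw [← rename_expand]
  exact funext fun x => by rw [eval_rename, hperm]

end MvPolynomial

section ExtendByZero

variable {σ τ R : Type*}

theorem prod_extend_one [CommMonoid R] [Fintype σ] [Fintype τ] (e : τ ↪ σ) (f : τ → R) :
    ∏ j, extend e f 1 j = ∏ i, f i := by
  classical
  calc ∏ j, extend e f 1 j = ∏ j ∈ Finset.univ.map e, extend e f 1 j := by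
        refine (Finset.prod_subset (Finset.subset_univ _) fun j _ hj => ?_).symm
        exact extend_apply' _ _ _ fun ⟨i, hi⟩ => hj (by simp [← hi])
    _ = ∏ i, f i := by simp [e.injective.extend_apply]

theorem extend_zero_pow [MonoidWithZero R] (e : τ ↪ σ) (x : τ → R) {p : ℕ} (hp : p ≠ 0) :
    extend e x 0 ^ p = extend e (x ^ p) 0 := by
  funext j
  rw [Pi.pow_apply, apply_extend (· ^ p)]
  congr 1
  funext j
  simp [hp]

theorem exists_signedPerm_extend_zero [CommRing R] [Fintype σ] [Fintype τ] (e : τ ↪ σ) {i₀ : σ}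
    (hi₀ : i₀ ∉ Set.range e) (π : Equiv.Perm τ) {ε : τ → R} (hε : ∀ i, ε i = 1 ∨ ε i = -1) :
    ∃ (π' : Equiv.Perm σ) (ε' : σ → R), (∀ j, ε' j = 1 ∨ ε' j = -1) ∧ ∏ j, ε' j = 1 ∧
      ∀ x : τ → R,
        (fun j => ε' j * extend e x 0 (π' j)) = extend e (fun i => ε i * x (π i)) 0 := by
  classical
  have pm_mul : ∀ a b : R, (a = 1 ∨ a = -1) → (b = 1 ∨ b = -1) → (a * b = 1 ∨ a * b = -1) := by
    rintro a b (rfl | rfl) (rfl | rfl) <;> simp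
  have hprod : (∏ i, ε i) = 1 ∨ (∏ i, ε i) = -1 :=
    Finset.prod_induction ε _ pm_mul (Or.inl rfl) fun i _ => hε i
  -- the extra sign `∏ ε` at `i₀`, invisible on vectors supported on the range of `e`,
  -- makes the total product of signs equal to `1`
  refine ⟨π.viaFintypeEmbedding e, extend e ε 1 * Pi.mulSingle i₀ (∏ i, ε i), fun j => ?_, ?_,
    fun x => ?_⟩
  · refine pm_mul _ _ ?_ ?_
    · by_cases hj : ∃ i, e i = j
      · obtain ⟨i, rfl⟩ := hj
        simpa [e.injective.extend_apply] using hε i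
      · simp [extend_apply' _ _ _ hj]
    · by_cases hj : j = i₀
      · simpa [hj] using hprod
      · simp [hj]
  · simp only [Pi.mul_apply]
    rw [Finset.prod_mul_distrib, prod_extend_one, Finset.prod_pi_mulSingle',
      if_pos (Finset.mem_univ _), ← Finset.prod_mul_distrib]
    exact Finset.prod_eq_one fun i _ => by rcases hε i with h | h <;> simp [h]
  · funext j
    by_cases hj : ∃ i, e i = j
    · obtain ⟨i, rfl⟩ := hj
      have hi : e i ≠ i₀ := fun h => hi₀ ⟨i, h⟩
      simp [e.injective.extend_apply, hi]
    · rw [Equiv.Perm.viaFintypeEmbedding_apply_notMem_range _ _ (by simpa using hj)]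
      simp [extend_apply' _ _ _ hj]

theorem MvPolynomial.exists_eval_eq_eval_extend_zero [CommSemiring R] (e : τ → σ)
    (φ : MvPolynomial σ R) : ∃ ψ : MvPolynomial τ R, ∀ x, eval x ψ = eval (extend e x 0) φ := by
  refine ⟨aeval (extend e X 0) φ, fun x => ?_⟩
  have hx : (fun j => eval x (extend e X 0 j)) = extend e x 0 := by
    funext j
    rw [apply_extend (eval x)]
    congr 1
    funext i
    simp
  rw [eval_aeval, hx]

theorem MvPolynomial.eval_esymm_extend_zero [CommSemiring R] [Fintype σ] [Fintype τ] (e : τ ↪ σ)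
    (x : τ → R) (r : ℕ) : eval (extend e x 0) (esymm σ R r) = eval x (esymm τ R r) := by
  classical
  simp only [esymm, map_sum, map_prod, eval_X]
  calc ∑ t ∈ Finset.powersetCard r Finset.univ, ∏ j ∈ t, extend e x 0 j
      = ∑ t ∈ Finset.powersetCard r (Finset.univ.map e), ∏ j ∈ t, extend e x 0 j := by
        refine (Finset.sum_subset (Finset.powersetCard_mono (Finset.subset_univ _))
          fun t ht ht' => ?_).symm
        obtain ⟨j, hjt, hj⟩ := Finset.not_subset.1 fun h =>
          ht' (Finset.mem_powersetCard.2 ⟨h, (Finset.mem_powersetCard.1 ht).2⟩)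
        exact Finset.prod_eq_zero hjt (extend_apply' _ _ _ fun ⟨i, hi⟩ => hj (by simp [← hi]))
    _ = ∑ t ∈ Finset.powersetCard r Finset.univ, ∏ i ∈ t, x i := by
        simp [Finset.powersetCard_map, e.injective.extend_apply]

theorem MvPolynomial.IsSymmetric.exists_eval_extend_zero [CommRing R] [Fintype σ] [Fintype τ]
    (e : τ ↪ σ) {φ : MvPolynomial τ R} (hφ : φ.IsSymmetric) :
    ∃ ψ : MvPolynomial σ R, ψ.IsSymmetric ∧ ∀ x, eval (extend e x 0) ψ = eval x φ := by
  obtain ⟨F, hF⟩ := esymmAlgHom_surjective R (le_refl (Fintype.card τ)) ⟨φ, hφ⟩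
  have hφF : φ = aeval (fun i : Fin _ => esymm τ R (i + 1)) F := by
    rw [← esymmAlgHom_apply, hF]
  refine ⟨esymmAlgHom σ R _ F, (esymmAlgHom σ R _ F).2, fun x => ?_⟩
  rw [hφF, esymmAlgHom_apply, eval_aeval, eval_aeval]
  simp only [eval_esymm_extend_zero]

end ExtendByZero

def padEmb {n k : ℕ} (h : n ≤ k) : Fin n ↪ Fin k :=
  (Fin.natAddEmb (k - n)).trans (Fin.castLEEmb (by omega))

@[simp]
theorem padEmb_apply_val {n k : ℕ} (h : n ≤ k) (i : Fin n) : (padEmb h i : ℕ) = k - n + i :=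
  rfl

theorem padk_eq_extend {n k : ℕ} (h : n ≤ k) (x : Fin n → ℝ) :
    padk k n x = extend (padEmb h) x 0 := by
  funext j
  by_cases hj : (j : ℕ) < k - n
  · rw [padk, dif_pos hj, extend_apply' _ _ _]
    · rfl
    · rintro ⟨i, rfl⟩
      simp at hj
  · obtain ⟨i, rfl⟩ : ∃ i, padEmb h i = j :=
      ⟨⟨j - (k - n), by omega⟩, Fin.ext (by simp only [padEmb_apply_val]; omega)⟩
    rw [padk, dif_neg hj, (padEmb h).injective.extend_apply]
    congr 1
    ext
    simp

theorem HInv.dInv {m : ℕ} {P : MvPolynomial (Fin m) ℝ} (hP : HInv m P) : DInv m P :=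
  fun σ ε hε _ => hP σ ε hε

theorem HInv.exists_isSymmetric_expand_two {m : ℕ} {P : MvPolynomial (Fin m) ℝ}
    (hP : HInv m P) : ∃ S : MvPolynomial (Fin m) ℝ, S.IsSymmetric ∧ expand 2 S = P := by
  refine MvPolynomial.exists_isSymmetric_expand_two (fun π x => ?_) (fun i x => ?_)
  · simpa [Function.comp_def] using hP π 1 (fun _ => Or.inl rfl) x
  · have hx : (fun j => Function.update (1 : Fin m → ℝ) i (-1) j * x (Equiv.refl _ j)) =
        Function.update x i (-x i) := by
      funext j
      rcases eq_or_ne j i with rfl | hj <;> simp [*]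
    rw [← hx]
    refine hP _ _ (fun j => ?_) x
    rcases eq_or_ne j i with rfl | hj <;> simp [*]

theorem MvPolynomial.IsSymmetric.hInv_expand_two {m : ℕ} {T : MvPolynomial (Fin m) ℝ}
    (hT : T.IsSymmetric) : HInv m (expand 2 T) := by
  intro σ ε hε x
  have hsq : (fun j => ε j * x (σ j)) ^ 2 = (x ^ 2) ∘ σ := by
    funext j
    rcases hε j with h | h <;> simp [h]
  rw [eval_expand, eval_expand, hsq, ← eval_rename, hT σ]

theorem HInv.exists_hInv_extension {n k : ℕ} (h : n ≤ k) {P : MvPolynomial (Fin n) ℝ}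
    (hP : HInv n P) : ∃ Q, HInv k Q ∧ ∀ x, eval (padk k n x) Q = eval x P := by
  obtain ⟨S, hS, rfl⟩ := hP.exists_isSymmetric_expand_two
  obtain ⟨T, hT, hTS⟩ := hS.exists_eval_extend_zero (padEmb h)
  refine ⟨expand 2 T, hT.hInv_expand_two, fun x => ?_⟩
  rw [eval_expand, eval_expand, padk_eq_extend h, extend_zero_pow _ _ two_ne_zero, hTS]

theorem DInv.exists_hInv_restriction {n k : ℕ} (hnk : n < k) {Q : MvPolynomial (Fin k) ℝ}
    (hQ : DInv k Q) : ∃ P, HInv n P ∧ ∀ x, eval x P = eval (padk k n x) Q := by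
  obtain ⟨P, hP⟩ := exists_eval_eq_eval_extend_zero (padEmb hnk.le) Q
  simp only [← padk_eq_extend hnk.le] at hP
  refine ⟨P, fun σ ε hε x => ?_, hP⟩
  have h0 : (⟨0, by omega⟩ : Fin k) ∉ Set.range (padEmb hnk.le) := by
    rintro ⟨i, hi⟩
    have hi' := congrArg Fin.val hi
    simp only [padEmb_apply_val] at hi'
    omega
  obtain ⟨σ', ε', hε', hprod, hpad⟩ := exists_signedPerm_extend_zero (padEmb hnk.le) h0 σ hε
  rw [hP, hP, padk_eq_extend hnk.le, padk_eq_extend hnk.le, ← hpad, hQ σ' ε' hε' hprod]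

theorem stmt_7_general (n k : ℕ) (hnk : n < k) :
    ({f : (Fin n → ℝ) → ℝ | ∃ Q : MvPolynomial (Fin k) ℝ, DInv k Q ∧
        f = fun x => MvPolynomial.eval (padk k n x) Q} =
      {f : (Fin n → ℝ) → ℝ | ∃ P : MvPolynomial (Fin n) ℝ, HInv n P ∧
        f = fun x => MvPolynomial.eval x P}) ∧
    ({f : (Fin n → ℝ) → ℝ | ∃ Q : MvPolynomial (Fin k) ℝ, DInv k Q ∧
        f = fun x => MvPolynomial.eval (padk k n x) Q} =
      {f : (Fin n → ℝ) → ℝ | ∃ Q : MvPolynomial (Fin k) ℝ, HInv k Q ∧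
        f = fun x => MvPolynomial.eval (padk k n x) Q}) := by
  have restrictD : ∀ Q, DInv k Q →
      ∃ P, HInv n P ∧ (fun x => eval (padk k n x) Q) = fun x => eval x P := fun Q hQ =>
    (hQ.exists_hInv_restriction hnk).imp fun _ ⟨hP, hPQ⟩ => ⟨hP, (funext hPQ).symm⟩
  have extendH : ∀ P, HInv n P →
      ∃ Q, HInv k Q ∧ (fun x => eval x P) = fun x => eval (padk k n x) Q := fun P hP =>
    (hP.exists_hInv_extension hnk.le).imp fun _ ⟨hQ, hQP⟩ => ⟨hQ, (funext hQP).symm⟩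
  refine ⟨Set.Subset.antisymm ?_ ?_, Set.Subset.antisymm ?_ ?_⟩
  · rintro _ ⟨Q, hQ, rfl⟩
    exact restrictD Q hQ
  · rintro _ ⟨P, hP, rfl⟩
    obtain ⟨Q, hQ, hPQ⟩ := extendH P hP
    exact ⟨Q, hQ.dInv, hPQ⟩
  · rintro _ ⟨Q, hQ, rfl⟩
    obtain ⟨P, hP, hQP⟩ := restrictD Q hQ
    rw [hQP]
    exact extendH P hP
  · rintro _ ⟨Q, hQ, rfl⟩
    exact ⟨Q, hQ.dInv, rfl⟩

/-- for `1 ≤ n < k`, the algebra of restrictions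
`{x ↦ Q(0_{k-n}, x) : Q a W(D_k)-invariant polynomial on ℝ^k}` equals the
algebra of `H_n`-invariant polynomial functions on `ℝ^n`, and also equals the
algebra of restrictions of the `H_k`-invariant polynomials on `ℝ^k`. -/
theorem stmt_7 (n k : ℕ) (hn : 1 ≤ n) (hnk : n < k) :
    ({f : (Fin n → ℝ) → ℝ | ∃ Q : MvPolynomial (Fin k) ℝ, DInv k Q ∧
        f = fun x => MvPolynomial.eval (padk k n x) Q} =
      {f : (Fin n → ℝ) → ℝ | ∃ P : MvPolynomial (Fin n) ℝ, HInv n P ∧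
        f = fun x => MvPolynomial.eval x P}) ∧
    ({f : (Fin n → ℝ) → ℝ | ∃ Q : MvPolynomial (Fin k) ℝ, DInv k Q ∧
        f = fun x => MvPolynomial.eval (padk k n x) Q} =
      {f : (Fin n → ℝ) → ℝ | ∃ Q : MvPolynomial (Fin k) ℝ, HInv k Q ∧
        f = fun x => MvPolynomial.eval (padk k n x) Q}) :=
  stmt_7_general n k hnk
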